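/- arXiv:1103.2513 — 12 statements merged into one kernel-verified Lean document; each statement's English description precedes it below -/
import Mathlib

section
/- Let G be a connected simple graph with n vertices and m edges. Then PI_v(G) ≤ Sz(G) + m, with equality if and only if for every edge e = uv of G one has min(n_u(e), n_v(e)) = 1. -/
/-!
Distance-based topological indices (PI, vertex PI, Szeged, edge Szeged, Zagreb indices,
triangle counts) for finite simple graphs, following Ilić, "Note on PI and Szeged indices".
-/

open scoped Classical
open Finset

namespace PaperDefs

variable {V : Type*} [Fintype V]

/-- `nCloser G u v` is `n_u(e)` for the edge `e = uv`: the number of vertices of `G`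
whose distance to `u` is strictly smaller than their distance to `v`. -/
noncomputable def nCloser (G : SimpleGraph V) (u v : V) : ℕ :=
  (Finset.univ.filter fun w => G.dist w u < G.dist w v).card

/-- The distance `d'(w, e) = min (d w u, d w v)` between a vertex `w` and an edge `e = uv`. -/
noncomputable def vertexEdgeDist (G : SimpleGraph V) (w : V) (e : Sym2 V) : ℕ :=
  Sym2.lift ⟨fun x y => min (G.dist w x) (G.dist w y), fun _ _ => min_comm _ _⟩ e

/-- `mCloser G u v` is `m_u(e)` for the edge `e = uv`: the number of edges of `G`
whose distance to `u` is strictly smaller than their distance to `v`. -/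
noncomputable def mCloser (G : SimpleGraph V) (u v : V) : ℕ :=
  (G.edgeFinset.filter fun f => vertexEdgeDist G u f < vertexEdgeDist G v f).card

/-- The vertex PI index `PI_v(G) = Σ_{e = uv ∈ E} (n_u(e) + n_v(e))`. -/
noncomputable def PIv (G : SimpleGraph V) : ℕ :=
  ∑ e ∈ G.edgeFinset,
    Sym2.lift ⟨fun u v => nCloser G u v + nCloser G v u, fun _ _ => add_comm _ _⟩ e

/-- The Szeged index `Sz(G) = Σ_{e = uv ∈ E} n_u(e) · n_v(e)`. -/
noncomputable def Sz (G : SimpleGraph V) : ℕ :=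
  ∑ e ∈ G.edgeFinset,
    Sym2.lift ⟨fun u v => nCloser G u v * nCloser G v u, fun _ _ => mul_comm _ _⟩ e

/-- The PI index `PI(G) = Σ_{e = uv ∈ E} (m_u(e) + m_v(e))`. -/
noncomputable def PI (G : SimpleGraph V) : ℕ :=
  ∑ e ∈ G.edgeFinset,
    Sym2.lift ⟨fun u v => mCloser G u v + mCloser G v u, fun _ _ => add_comm _ _⟩ e

/-- The edge Szeged index `Sz_e(G) = Σ_{e = uv ∈ E} m_u(e) · m_v(e)`. -/
noncomputable def Sze (G : SimpleGraph V) : ℕ :=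
  ∑ e ∈ G.edgeFinset,
    Sym2.lift ⟨fun u v => mCloser G u v * mCloser G v u, fun _ _ => mul_comm _ _⟩ e

/-- The first Zagreb index `M₁(G) = Σ_{v ∈ V} deg(v)²`. -/
noncomputable def M1 (G : SimpleGraph V) : ℕ :=
  ∑ v : V, G.degree v ^ 2

/-- The second Zagreb index `M₂(G) = Σ_{uv ∈ E} deg(u) · deg(v)`. -/
noncomputable def M2 (G : SimpleGraph V) : ℕ :=
  ∑ e ∈ G.edgeFinset,
    Sym2.lift ⟨fun u v => G.degree u * G.degree v, fun _ _ => mul_comm _ _⟩ e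

/-- `triCount G` is `t(G)`, the number of triangles (subgraphs isomorphic to `K₃`) in `G`. -/
noncomputable def triCount (G : SimpleGraph V) : ℕ :=
  (G.cliqueFinset 3).card

/-- `triEdge G u v` is `t(e)`, the number of triangles containing the edge `e = uv`,
i.e. the number of common neighbors of `u` and `v`. -/
noncomputable def triEdge (G : SimpleGraph V) (u v : V) : ℕ :=
  (Finset.univ.filter fun w => G.Adj u w ∧ G.Adj v w).card

end PaperDefs

open PaperDefs

/-!
Every edge `uv` has `n_u, n_v ≥ 1`, since `u` is closer to itself than to `v`. For positive
integers `a + b ≤ a b + 1`, the difference being `(a - 1)(b - 1)`, so summing over the edges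
gives the inequality, with equality exactly when every edge has `min (n_u, n_v) = 1`.
-/

theorem PaperDefs.one_le_nCloser {V : Type*} [Fintype V] (G : SimpleGraph V) {u v : V}
    (h : G.Adj u v) : 1 ≤ nCloser G u v :=
  Finset.card_pos.2 ⟨u, by simp [SimpleGraph.dist_eq_one_iff_adj.2 h]⟩

namespace SimpleGraph

variable {V : Type*} [Fintype V] {G : SimpleGraph V}

theorem sum_edgeFinset_lift_le_add_card (f g : {f : V → V → ℕ // ∀ a b, f a b = f b a})
    (h : ∀ u v, G.Adj u v → f.1 u v ≤ g.1 u v + 1) :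
    ∑ e ∈ G.edgeFinset, Sym2.lift f e ≤ ∑ e ∈ G.edgeFinset, Sym2.lift g e + #G.edgeFinset ∧
      (∑ e ∈ G.edgeFinset, Sym2.lift f e = ∑ e ∈ G.edgeFinset, Sym2.lift g e + #G.edgeFinset ↔
        ∀ u v, G.Adj u v → f.1 u v = g.1 u v + 1) := by
  have hterm : ∀ e ∈ G.edgeFinset, Sym2.lift f e ≤ Sym2.lift g e + 1 := by
    rintro ⟨u, v⟩ he
    exact h u v (mem_edgeFinset.1 he)
  have hsum : ∑ e ∈ G.edgeFinset, Sym2.lift g e + #G.edgeFinset =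
      ∑ e ∈ G.edgeFinset, (Sym2.lift g e + 1) := by
    rw [Finset.sum_add_distrib, Finset.card_eq_sum_ones]
  rw [hsum, Finset.sum_eq_sum_iff_of_le hterm]
  refine ⟨Finset.sum_le_sum hterm, fun heq u v huv => heq s(u, v) (mem_edgeFinset.2 huv), ?_⟩
  rintro heq ⟨u, v⟩ he
  exact heq u v (mem_edgeFinset.1 he)

end SimpleGraph

namespace Nat

theorem add_le_mul_add_one {a b : ℕ} (ha : 1 ≤ a) (hb : 1 ≤ b) : a + b ≤ a * b + 1 := by
  nlinarith

theorem add_eq_mul_add_one_iff {a b : ℕ} (ha : 1 ≤ a) (hb : 1 ≤ b) :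
    a + b = a * b + 1 ↔ min a b = 1 := by
  obtain ⟨a, rfl⟩ := Nat.exists_eq_add_of_le ha
  obtain ⟨b, rfl⟩ := Nat.exists_eq_add_of_le hb
  have : (1 + a) * (1 + b) + 1 = 1 + a + (1 + b) + a * b := by ring
  rw [this, left_eq_add, Nat.mul_eq_zero]
  omega

end Nat

theorem stmt_0_general {V : Type*} [Fintype V] (G : SimpleGraph V) :
    PIv G ≤ Sz G + G.edgeFinset.card ∧
      (PIv G = Sz G + G.edgeFinset.card ↔
        ∀ u v : V, G.Adj u v → min (nCloser G u v) (nCloser G v u) = 1) := by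
  have hpos {u v : V} (h : G.Adj u v) := And.intro (one_le_nCloser G h) (one_le_nCloser G h.symm)
  have key := G.sum_edgeFinset_lift_le_add_card
    ⟨fun u v => nCloser G u v + nCloser G v u, fun _ _ => add_comm _ _⟩
    ⟨fun u v => nCloser G u v * nCloser G v u, fun _ _ => mul_comm _ _⟩
    fun u v h => Nat.add_le_mul_add_one (hpos h).1 (hpos h).2
  refine ⟨key.1, key.2.trans (forall₃_congr fun u v h => ?_)⟩
  exact Nat.add_eq_mul_add_one_iff (hpos h).1 (hpos h).2

/-- For a connected graph `G` with `m` edges, `PI_v(G) ≤ Sz(G) + m`,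
with equality iff `min(n_u(e), n_v(e)) = 1` for every edge `e = uv`. -/
theorem stmt_0 {V : Type*} [Fintype V] (G : SimpleGraph V) (hG : G.Connected) :
    PIv G ≤ Sz G + G.edgeFinset.card ∧
      (PIv G = Sz G + G.edgeFinset.card ↔
        ∀ u v : V, G.Adj u v → min (nCloser G u v) (nCloser G v u) = 1) :=
  stmt_0_general G
end

section
/- Let G be a connected simple graph that contains no induced path P_4 on four vertices and no induced cycle C_4 on four vertices. Then for every edge e = uv of G one has min(n_u(e), n_v(e)) = 1. -/
/-!
Distance-based topological indices (PI, vertex PI, Szeged, edge Szeged, Zagreb indices,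
triangle counts) for finite simple graphs, following Ilić, "Note on PI and Szeged indices".
-/

open scoped Classical
open Finset

open PaperDefs

/-!
A vertex other than `u` that is closer to `u` than to `v` yields, as the first step of a shortest
path to it from `u`, a neighbour of `u` at distance at least two from `v`. If this happened on
both sides of the edge `uv`, such private neighbours `x` of `u` and `y` of `v` would make
`x u v y` an induced `C₄` when `x` and `y` are adjacent and an induced `P₄` otherwise.
-/

namespace SimpleGraph

variable {V : Type*} {G : SimpleGraph V} {u v x : V}

lemma Reachable.exists_adj_dist_lt (h : G.Reachable u x) (hne : u ≠ x) :
    ∃ w, G.Adj u w ∧ G.dist w x < G.dist u x := by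
  obtain ⟨p, hp⟩ := h.exists_walk_length_eq_dist
  cases p with
  | nil => exact absurd rfl hne
  | cons hadj q => exact ⟨_, hadj, (dist_le q).trans_lt (by simp [← hp])⟩

lemma Adj.exists_adj_not_adj_of_dist_lt (huv : G.Adj u v) (hxu : x ≠ u)
    (h : G.dist x u < G.dist x v) : ∃ w, G.Adj u w ∧ w ≠ v ∧ ¬ G.Adj v w := by
  have hxv : G.Reachable x v := Reachable.of_dist_ne_zero (by omega)
  have hux : G.Reachable u x := (hxv.trans huv.reachable.symm).symm
  obtain ⟨w, huw, hw⟩ := hux.exists_adj_dist_lt hxu.symm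
  have htri : G.dist x v ≤ G.dist x w + G.dist w v :=
    (hux.symm.trans huw.reachable).dist_triangle_left v
  have hwv : 2 ≤ G.dist w v := by
    rw [dist_comm (u := x) (v := w)] at htri
    rw [dist_comm (u := u) (v := x)] at hw
    omega
  refine ⟨w, huw, ?_, fun hvw => ?_⟩
  · rintro rfl
    simp at hwv
  · rw [dist_eq_one_iff_adj.mpr hvw.symm] at hwv
    omega

end SimpleGraph

namespace PaperDefs

variable {V : Type*} [Fintype V] {G : SimpleGraph V} {u v : V}

lemma one_le_nCloser_s1 (huv : G.Adj u v) : 1 ≤ nCloser G u v :=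
  Finset.card_pos.mpr ⟨u, by simp [SimpleGraph.dist_eq_one_iff_adj.mpr huv]⟩

lemma exists_adj_not_adj_of_one_lt_nCloser (huv : G.Adj u v) (h : 1 < nCloser G u v) :
    ∃ w, G.Adj u w ∧ w ≠ v ∧ ¬ G.Adj v w := by
  obtain ⟨x, hx, hxu⟩ := Finset.exists_mem_ne h u
  exact huv.exists_adj_not_adj_of_dist_lt hxu (Finset.mem_filter.mp hx).2

end PaperDefs

theorem stmt_1_general {V : Type*} [Fintype V] (G : SimpleGraph V)
    (hP4 : ¬ ∃ a b c d : V, a ≠ c ∧ a ≠ d ∧ b ≠ d ∧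
      G.Adj a b ∧ G.Adj b c ∧ G.Adj c d ∧ ¬ G.Adj a c ∧ ¬ G.Adj a d ∧ ¬ G.Adj b d)
    (hC4 : ¬ ∃ a b c d : V, a ≠ c ∧ b ≠ d ∧
      G.Adj a b ∧ G.Adj b c ∧ G.Adj c d ∧ G.Adj d a ∧ ¬ G.Adj a c ∧ ¬ G.Adj b d) :
    ∀ u v : V, G.Adj u v → min (nCloser G u v) (nCloser G v u) = 1 := by
  intro u v huv
  have hu := one_le_nCloser_s1 huv
  have hv := one_le_nCloser_s1 huv.symm
  by_contra hne
  obtain ⟨x, hux, hxv, hvx⟩ := exists_adj_not_adj_of_one_lt_nCloser huv (by omega)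
  obtain ⟨y, hvy, hyu, huy⟩ := exists_adj_not_adj_of_one_lt_nCloser huv.symm (by omega)
  have hxy : x ≠ y := by rintro rfl; exact huy hux
  by_cases hadj : G.Adj x y
  · exact hC4 ⟨x, u, v, y, hxv, hyu.symm, hux.symm, huv, hvy, hadj.symm, hvx ∘ .symm, huy⟩
  · exact hP4 ⟨x, u, v, y, hxv, hxy, hyu.symm, hux.symm, huv, hvy, hvx ∘ .symm, hadj, huy⟩

/-- A connected graph with no induced `P₄` and no induced `C₄` satisfies
`min(n_u(e), n_v(e)) = 1` for every edge `e = uv`. -/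
theorem stmt_1 {V : Type*} [Fintype V] (G : SimpleGraph V) (hG : G.Connected)
    (hP4 : ¬ ∃ a b c d : V, a ≠ c ∧ a ≠ d ∧ b ≠ d ∧
      G.Adj a b ∧ G.Adj b c ∧ G.Adj c d ∧ ¬ G.Adj a c ∧ ¬ G.Adj a d ∧ ¬ G.Adj b d)
    (hC4 : ¬ ∃ a b c d : V, a ≠ c ∧ b ≠ d ∧
      G.Adj a b ∧ G.Adj b c ∧ G.Adj c d ∧ G.Adj d a ∧ ¬ G.Adj a c ∧ ¬ G.Adj b d) :
    ∀ u v : V, G.Adj u v → min (nCloser G u v) (nCloser G v u) = 1 :=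
  stmt_1_general G hP4 hC4
end

section
/- Let G be a connected simple graph on n vertices such that for every edge e = uv of G one has min(n_u(e), n_v(e)) = 1. Then G contains a vertex of degree n − 1. -/
/-!
Distance-based topological indices (PI, vertex PI, Szeged, edge Szeged, Zagreb indices,
triangle counts) for finite simple graphs, following Ilić, "Note on PI and Szeged indices".
-/

open scoped Classical
open Finset

open PaperDefs

/-!
Take `v` of maximum degree and suppose it is not universal. Connectivity gives a path
`v - x - w` with `w` not adjacent to `v`. On the edge `vx` both `x` and `w` are closer to `x`,
so `n_x(vx) ≥ 2` and hence `n_v(vx) = 1`: every vertex other than `v` is at least as close to `x`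
as to `v`. Hence every neighbour of `v` except `x` is a neighbour of `x`, and `x` is also adjacent
to `v` and `w`, so `deg x > deg v`, contradicting maximality.
-/

namespace SimpleGraph

variable {V : Type*} {G : SimpleGraph V}

theorem Connected.exists_adj_adj_not_adj_of_not_isUniversal (hG : G.Connected) {v : V}
    (hv : ¬ G.IsUniversal v) : ∃ x w, G.Adj v x ∧ G.Adj x w ∧ v ≠ w ∧ ¬ G.Adj v w := by
  obtain ⟨u, hvu, hnu⟩ : ∃ u, v ≠ u ∧ ¬ G.Adj v u := by
    simpa [IsUniversal] using hv
  obtain ⟨d, -, hd, hd'⟩ := (hG v u).some.exists_boundary_dart {z | v = z ∨ G.Adj v z}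
    (Or.inl rfl) (by simp [hvu, hnu])
  simp only [Set.mem_ofPred_eq, not_or] at hd hd'
  rcases hd with hd | hd
  · exact absurd (hd ▸ d.adj) hd'.2
  · exact ⟨_, _, hd, d.adj, hd'.1, hd'.2⟩

theorem degree_lt_degree_of_erase_neighborFinset_subset [Fintype V] [DecidableEq V]
    [DecidableRel G.Adj] {v x w : V} (hvx : G.Adj v x)
    (hsub : (G.neighborFinset v).erase x ⊆ G.neighborFinset x) (hxw : G.Adj x w) (hvw : v ≠ w)
    (hnvw : ¬ G.Adj v w) : G.degree v < G.degree x := by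
  have hsub' : insert v (insert w ((G.neighborFinset v).erase x)) ⊆ G.neighborFinset x := by
    simp only [Finset.insert_subset_iff, mem_neighborFinset]
    exact ⟨hvx.symm, hxw, hsub⟩
  have hcard := Finset.card_le_card hsub'
  rw [Finset.card_insert_of_notMem (by simp [hvw]), Finset.card_insert_of_notMem (by simp [hnvw]),
    Finset.card_erase_of_mem (by simpa using hvx), card_neighborFinset_eq_degree,
    card_neighborFinset_eq_degree] at hcard
  have := G.degree_pos_iff_exists_adj v |>.mpr ⟨x, hvx⟩
  omega

end SimpleGraph

namespace PaperDefs

open SimpleGraph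

variable {V : Type*} [Fintype V] {G : SimpleGraph V} {v x : V}

theorem mem_filter_dist_lt_of_adj (hvx : G.Adj v x) :
    v ∈ Finset.univ.filter fun w => G.dist w v < G.dist w x := by
  simp [dist_eq_one_iff_adj.mpr hvx]

theorem two_le_nCloser {w : V} (hvx : G.Adj v x) (hxw : G.Adj x w) (hvw : v ≠ w)
    (hnvw : ¬ G.Adj v w) : 2 ≤ nCloser G x v := by
  have hwv : 1 < G.dist w v := by
    have hpos := (hxw.symm.reachable.trans hvx.symm.reachable).pos_dist_of_ne hvw.symm
    have hne : G.dist w v ≠ 1 := fun h => hnvw (dist_eq_one_iff_adj.mp h).symm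
    omega
  have hsub : {x, w} ⊆ Finset.univ.filter fun z => G.dist z x < G.dist z v := by
    simp only [Finset.insert_subset_iff, Finset.singleton_subset_iff]
    refine ⟨mem_filter_dist_lt_of_adj hvx.symm, ?_⟩
    simpa [dist_eq_one_iff_adj.mpr hxw.symm] using hwv
  simpa [nCloser, Finset.card_pair hxw.ne] using Finset.card_le_card hsub

theorem erase_neighborFinset_subset_of_nCloser_eq_one (hvx : G.Adj v x)
    (h1 : nCloser G v x = 1) : (G.neighborFinset v).erase x ⊆ G.neighborFinset x := by
  intro z hz
  rw [Finset.mem_erase, mem_neighborFinset] at hz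
  obtain ⟨hzx, hvz⟩ := hz
  obtain ⟨a, ha⟩ := Finset.card_eq_one.mp h1
  have hv := mem_filter_dist_lt_of_adj hvx
  have hzx_le : G.dist z x ≤ 1 := by
    by_contra hlt
    have hz : z ∈ Finset.univ.filter fun w => G.dist w v < G.dist w x := by
      simp [dist_eq_one_iff_adj.mpr hvz.symm]
      omega
    rw [ha, Finset.mem_singleton] at hv hz
    exact hvz.ne (hv.trans hz.symm)
  have hpos := (hvz.symm.reachable.trans hvx.reachable).pos_dist_of_ne hzx
  exact (mem_neighborFinset _ _ _).mpr (dist_eq_one_iff_adj.mp (by omega)).symm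

end PaperDefs

open PaperDefs

/-- A connected graph on `n` vertices in which every edge `e = uv` satisfies
`min(n_u(e), n_v(e)) = 1` contains a vertex of degree `n - 1`. -/
theorem stmt_2 {V : Type*} [Fintype V] (G : SimpleGraph V) (hG : G.Connected)
    (h : ∀ u v : V, G.Adj u v → min (nCloser G u v) (nCloser G v u) = 1) :
    ∃ v : V, G.degree v = Fintype.card V - 1 := by
  have := hG.nonempty
  obtain ⟨v, hvmax⟩ := G.exists_maximal_degree_vertex
  refine ⟨v, (G.degree_eq_card_sub_one v).mpr ?_⟩
  by_contra hv
  obtain ⟨x, w, hvx, hxw, hvw, hnvw⟩ := hG.exists_adj_adj_not_adj_of_not_isUniversal hv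
  have hnv : nCloser G v x = 1 := by
    have := h v x hvx
    have := two_le_nCloser hvx hxw hvw hnvw
    omega
  have hlt := G.degree_lt_degree_of_erase_neighborFinset_subset hvx
    (erase_neighborFinset_subset_of_nCloser_eq_one hvx hnv) hxw hvw hnvw
  have := hvmax ▸ G.degree_le_maxDegree x
  omega
end

section
/- Let G be a connected simple graph with n vertices, m edges, and minimum vertex degree δ(G) ≥ 2. Then PI(G) ≤ Sz_e(G) + m, with equality if and only if for every edge e = uv of G one has min(m_u(e), m_v(e)) = 1. -/
/-!
Distance-based topological indices (PI, vertex PI, Szeged, edge Szeged, Zagreb indices,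
triangle counts) for finite simple graphs, following Ilić, "Note on PI and Szeged indices".
-/

open scoped Classical
open Finset

open PaperDefs

/-! Since `δ(G) ≥ 2`, each endpoint `u` of an edge `uv` has a second edge `uw`, which is closer
to `u` than to `v`; hence `m_u(e), m_v(e) ≥ 1`. For positive integers
`a + b ≤ a b + 1` is `(a - 1)(b - 1) ≥ 0`, with equality iff `min a b = 1`; summing over the
edges gives the inequality and its equality case. -/

theorem Nat.add_le_mul_add_one_s3 {a b : ℕ} (ha : 1 ≤ a) (hb : 1 ≤ b) : a + b ≤ a * b + 1 := by
  nlinarith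

theorem Nat.add_eq_mul_add_one_iff_s3 {a b : ℕ} (ha : 1 ≤ a) (hb : 1 ≤ b) :
    a + b = a * b + 1 ↔ min a b = 1 := by
  refine ⟨fun h => ?_, fun h => ?_⟩
  · by_contra hne
    have h2a : 2 ≤ a := by omega
    have h2b : 2 ≤ b := by omega
    nlinarith
  · rcases min_choice a b with hmin | hmin <;> rw [hmin] at h <;> subst h <;> ring

namespace SimpleGraph

variable {V : Type*} [Fintype V] {G : SimpleGraph V}

theorem sum_edgeFinset_le_and_eq_iff {f g : V → V → ℕ}
    (hf : ∀ u v, f u v = f v u) (hg : ∀ u v, g u v = g v u)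
    (hfg : ∀ u v, G.Adj u v → f u v ≤ g u v) :
    ∑ e ∈ G.edgeFinset, Sym2.lift ⟨f, hf⟩ e ≤ ∑ e ∈ G.edgeFinset, Sym2.lift ⟨g, hg⟩ e ∧
      (∑ e ∈ G.edgeFinset, Sym2.lift ⟨f, hf⟩ e = ∑ e ∈ G.edgeFinset, Sym2.lift ⟨g, hg⟩ e ↔
        ∀ u v, G.Adj u v → f u v = g u v) := by
  have hle : ∀ e ∈ G.edgeFinset, Sym2.lift ⟨f, hf⟩ e ≤ Sym2.lift ⟨g, hg⟩ e := by
    rintro ⟨u, v⟩ huv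
    exact hfg u v (mem_edgeFinset.mp huv)
  refine ⟨sum_le_sum hle, (sum_eq_sum_iff_of_le hle).trans ?_⟩
  exact ⟨fun h u v huv => h s(u, v) (mem_edgeFinset.mpr huv),
    fun h => by rintro ⟨u, v⟩ huv; exact h u v (mem_edgeFinset.mp huv)⟩

end SimpleGraph

namespace PaperDefs

open SimpleGraph

variable {V : Type*} [Fintype V] {G : SimpleGraph V}

theorem one_le_mCloser {u v : V} (huv : G.Adj u v) (hu : 2 ≤ G.degree u) :
    1 ≤ mCloser G u v := by
  obtain ⟨w, huw, hwv⟩ := exists_mem_ne (hu.trans_eq (card_neighborFinset_eq_degree G u).symm) v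
  rw [mem_neighborFinset] at huw
  have hvw : 0 < G.dist v w :=
    (huv.symm.reachable.trans huw.reachable).pos_dist_of_ne hwv.symm
  refine one_le_card.mpr ⟨s(u, w), mem_filter.mpr ⟨mem_edgeFinset.mpr huw, ?_⟩⟩
  simp only [vertexEdgeDist, Sym2.lift_mk, dist_self, lt_min_iff, dist_eq_one_iff_adj.mpr huv.symm]
  omega

theorem Sze_add_card_edgeFinset :
    Sze G + #G.edgeFinset = ∑ e ∈ G.edgeFinset,
      Sym2.lift ⟨fun u v => mCloser G u v * mCloser G v u + 1,
        fun _ _ => congrArg (· + 1) (Nat.mul_comm _ _)⟩ e := by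
  rw [Sze, card_eq_sum_ones, ← sum_add_distrib]
  refine sum_congr rfl ?_
  rintro ⟨u, v⟩ -
  rfl

end PaperDefs

theorem stmt_3_general {V : Type*} [Fintype V] (G : SimpleGraph V)
    (hδ : 2 ≤ G.minDegree) :
    PI G ≤ Sze G + G.edgeFinset.card ∧
      (PI G = Sze G + G.edgeFinset.card ↔
        ∀ u v : V, G.Adj u v → min (mCloser G u v) (mCloser G v u) = 1) := by
  have hpos : ∀ u v, G.Adj u v → 1 ≤ mCloser G u v := fun u v huv =>
    one_le_mCloser huv (hδ.trans (G.minDegree_le_degree u))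
  rw [Sze_add_card_edgeFinset]
  refine (SimpleGraph.sum_edgeFinset_le_and_eq_iff _ _ fun u v huv =>
    Nat.add_le_mul_add_one_s3 (hpos u v huv) (hpos v u huv.symm)).imp_right (·.trans ?_)
  exact forall₃_congr fun u v huv =>
    Nat.add_eq_mul_add_one_iff_s3 (hpos u v huv) (hpos v u huv.symm)

/-- For a connected graph `G` with `m` edges and minimum degree `δ(G) ≥ 2`,
`PI(G) ≤ Sz_e(G) + m`, with equality iff `min(m_u(e), m_v(e)) = 1` for every edge `e = uv`. -/
theorem stmt_3 {V : Type*} [Fintype V] (G : SimpleGraph V) (hG : G.Connected)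
    (hδ : 2 ≤ G.minDegree) :
    PI G ≤ Sze G + G.edgeFinset.card ∧
      (PI G = Sze G + G.edgeFinset.card ↔
        ∀ u v : V, G.Adj u v → min (mCloser G u v) (mCloser G v u) = 1) :=
  stmt_3_general G hδ
end

section
/- Let G be a connected simple graph such that for every edge e = uv of G one has min(m_u(e), m_v(e)) = 1, and let v be a branching vertex of G (i.e. deg(v) > 2). Then every neighbor of v has degree exactly 2. -/
/-!
Distance-based topological indices (PI, vertex PI, Szeged, edge Szeged, Zagreb indices,
triangle counts) for finite simple graphs, following Ilić, "Note on PI and Szeged indices".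
-/

open scoped Classical
open Finset

open PaperDefs

/-!
At an edge `uv`, every other edge at `u` is at distance `0` from `u` but at positive distance
from `v`, so `m_u(uv) ≥ deg u - 1`; and if `u` is a leaf, every walk from `u` passes through `v`,
so no edge is strictly closer to `u` and `m_u(uv) = 0`. For a neighbour `u` of a branching vertex
`v` this gives `m_v(vu) ≥ 2`, hence `m_u(vu) = 1`, hence `deg u ≤ 2`, and `u` is not a leaf.
-/

namespace PaperDefs

variable {V : Type*} [Fintype V] {G : SimpleGraph V} {u v : V}

lemma eq_of_adj_of_degree_eq_one (hu : G.degree u = 1) (huv : G.Adj u v) {w : V}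
    (huw : G.Adj u w) : w = v :=
  (SimpleGraph.degree_eq_one_iff_existsUnique_adj.1 hu).unique huw huv

omit [Fintype V] in
@[simp]
lemma vertexEdgeDist_mk (G : SimpleGraph V) (w x y : V) :
    vertexEdgeDist G w s(x, y) = min (G.dist w x) (G.dist w y) := rfl

lemma degree_le_mCloser_add_one (huv : G.Adj u v) : G.degree u ≤ mCloser G u v + 1 := by
  have hsub : (G.incidenceFinset u).erase s(u, v) ⊆
      G.edgeFinset.filter fun f => vertexEdgeDist G u f < vertexEdgeDist G v f := by
    intro f hf
    obtain ⟨hfv, hfu⟩ := mem_erase.1 hf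
    obtain ⟨w, rfl⟩ := Sym2.mem_iff_exists.1 ((G.mem_incidenceFinset u f).1 hfu).2
    have huw : G.Adj u w := (G.mem_incidenceSet u w).1 ((G.mem_incidenceFinset u _).1 hfu)
    have hwv : w ≠ v := fun h => hfv (h ▸ rfl)
    have hvu : 0 < G.dist v u := huv.symm.reachable.pos_dist_of_ne huv.ne.symm
    have hvw : 0 < G.dist v w := (huv.symm.reachable.trans huw.reachable).pos_dist_of_ne hwv.symm
    simpa [huw] using lt_min hvu hvw
  have := card_le_card hsub
  rw [card_erase_of_mem ((G.mem_incidenceFinset u _).2 ((G.mem_incidenceSet u v).2 huv)),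
    G.card_incidenceFinset_eq_degree] at this
  rw [mCloser]
  omega

lemma dist_le_dist_of_degree_eq_one (huv : G.Adj u v) (hu : G.degree u = 1) {x : V}
    (hx : x ≠ u) : G.dist v x ≤ G.dist u x := by
  by_cases hux : G.Reachable u x
  · obtain ⟨p, hp⟩ := hux.exists_walk_length_eq_dist
    cases p with
    | nil => exact absurd rfl hx
    | cons huw q =>
      obtain rfl := eq_of_adj_of_degree_eq_one hu huv huw
      have := SimpleGraph.dist_le q
      simp only [SimpleGraph.Walk.length_cons] at hp
      omega
  · have hvx : ¬G.Reachable v x := fun h => hux (huv.reachable.trans h)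
    simp [SimpleGraph.dist_eq_zero_of_not_reachable, hux, hvx]

lemma mCloser_eq_zero_of_degree_eq_one (huv : G.Adj u v) (hu : G.degree u = 1) :
    mCloser G u v = 0 := by
  rw [mCloser, card_eq_zero, filter_eq_empty_iff]
  intro f hf
  induction f with
  | _ x y =>
    have hxy : G.Adj x y := G.mem_edgeFinset.1 hf
    rw [not_lt, vertexEdgeDist_mk, vertexEdgeDist_mk]
    by_cases hxu : x = u
    · subst hxu
      obtain rfl := eq_of_adj_of_degree_eq_one hu huv hxy
      simp
    by_cases hyu : y = u
    · subst hyu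
      obtain rfl := eq_of_adj_of_degree_eq_one hu huv hxy.symm
      simp
    exact min_le_min (dist_le_dist_of_degree_eq_one huv hu hxu)
      (dist_le_dist_of_degree_eq_one huv hu hyu)

end PaperDefs

theorem stmt_6_general {V : Type*} [Fintype V] (G : SimpleGraph V)
    (h : ∀ u v : V, G.Adj u v → min (mCloser G u v) (mCloser G v u) = 1)
    (v : V) (hv : 2 < G.degree v) :
    ∀ u : V, G.Adj v u → G.degree u = 2 := by
  intro u hvu
  have hmv := degree_le_mCloser_add_one hvu
  have hmu := degree_le_mCloser_add_one hvu.symm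
  have hmu1 : mCloser G u v = 1 := by
    have := h v u hvu
    omega
  have hu1 : G.degree u ≠ 1 := fun hu =>
    absurd (mCloser_eq_zero_of_degree_eq_one hvu.symm hu) (by omega)
  have hu0 : G.degree u ≠ 0 := (G.degree_pos_iff_exists_adj u).2 ⟨v, hvu.symm⟩ |>.ne'
  omega

/-- In a connected graph in which every edge `e = uv` satisfies
`min(m_u(e), m_v(e)) = 1`, every neighbor of a branching vertex (degree `> 2`) has degree `2`. -/
theorem stmt_6 {V : Type*} [Fintype V] (G : SimpleGraph V) (hG : G.Connected)
    (h : ∀ u v : V, G.Adj u v → min (mCloser G u v) (mCloser G v u) = 1)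
    (v : V) (hv : 2 < G.degree v) :
    ∀ u : V, G.Adj v u → G.degree u = 2 :=
  stmt_6_general G h v hv
end

section
/- Let G be a connected simple graph with diameter 2. Then PI_v(G) = M_1(G) − 6·t(G). -/
/-!
Distance-based topological indices (PI, vertex PI, Szeged, edge Szeged, Zagreb indices,
triangle counts) for finite simple graphs, following Ilić, "Note on PI and Szeged indices".
-/

open scoped Classical
open Finset

open PaperDefs

/-! If all distances are at most `2`, then for an edge `uv` a vertex `w` is strictly closer
to `u` than to `v` exactly when `w = u`, or `w` is a neighbour of `u` other than `v` that is not
adjacent to `v`. Hence `n_u(e) = deg u - t(e)`, with `t(e)` the number of common neighbours of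
`u` and `v`. Summing over darts, the degrees give `M₁(G)`, and the common neighbours give
`6 t(G)`, as every triangle carries six darts. -/
namespace SimpleGraph

variable {V : Type*} {G : SimpleGraph V}

lemma reachable_of_ediam_le_two (h : G.ediam ≤ 2) (u v : V) : G.Reachable u v :=
  edist_ne_top_iff_reachable.1 <| ne_top_of_le_ne_top (by decide) (edist_le_ediam.trans h)

lemma dist_le_two_of_ediam_le_two (h : G.ediam ≤ 2) (u v : V) : G.dist u v ≤ 2 :=
  ENat.toNat_le_of_le_natCast (edist_le_ediam.trans h)

lemma dist_lt_dist_iff_of_ediam_le_two (h : G.ediam ≤ 2) {u v : V} (huv : G.Adj u v) (w : V) :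
    G.dist w u < G.dist w v ↔ w = u ∨ G.Adj u w ∧ w ≠ v ∧ ¬G.Adj v w := by
  have hu := dist_le_two_of_ediam_le_two h w u
  have hv := dist_le_two_of_ediam_le_two h w v
  have hu0 := (reachable_of_ediam_le_two h w u).dist_eq_zero_iff
  have hv0 := (reachable_of_ediam_le_two h w v).dist_eq_zero_iff
  have hu1 : G.dist w u = 1 ↔ G.Adj u w := dist_eq_one_iff_adj.trans (G.adj_comm _ _)
  have hv1 : G.dist w v = 1 ↔ G.Adj v w := dist_eq_one_iff_adj.trans (G.adj_comm _ _)
  have := huv.ne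
  grind

variable [Fintype V]

lemma sum_edgeFinset_lift_add_eq_sum_dart {M : Type*} [AddCommMonoid M] (f : V → V → M) :
    ∑ e ∈ G.edgeFinset, Sym2.lift ⟨fun u v => f u v + f v u, fun _ _ => add_comm _ _⟩ e =
      ∑ d : G.Dart, f d.fst d.snd := by
  rw [← Finset.sum_fiberwise_of_maps_to (g := Dart.edge) (t := G.edgeFinset)
    (fun d _ => mem_edgeFinset.2 d.edge_mem)]
  refine Finset.sum_congr rfl fun e he => ?_
  induction e with
  | h u v =>
    let d : G.Dart := ⟨(u, v), mem_edgeFinset.1 he⟩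
    change _ = ∑ d' ∈ {d' : G.Dart | d'.edge = d.edge}, f d'.fst d'.snd
    rw [d.edge_fiber, Finset.sum_pair d.symm_ne.symm]
    rfl

lemma sum_dart_degree_fst : ∑ d : G.Dart, G.degree d.fst = ∑ v, G.degree v ^ 2 := by
  rw [← Finset.sum_fiberwise' Finset.univ (fun d : G.Dart => d.fst) (fun v => G.degree v)]
  refine Finset.sum_congr rfl fun v _ => ?_
  rw [Finset.sum_const, smul_eq_mul, sq]
  congr 1
  exact G.dart_fst_fiber_card_eq_degree v

end SimpleGraph

namespace PaperDefs

open SimpleGraph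

variable {V : Type*} [Fintype V] {G : SimpleGraph V}

lemma filter_dist_lt_dist_eq_of_ediam_le_two (h : G.ediam ≤ 2) {u v : V} (huv : G.Adj u v) :
    Finset.univ.filter (fun w => G.dist w u < G.dist w v) =
      insert u (G.neighborFinset u \ insert v (G.neighborFinset v)) := by
  ext w
  simp [dist_lt_dist_iff_of_ediam_le_two h huv]

lemma triEdge_eq_card_neighborFinset_inter (u v : V) :
    triEdge G u v = #(G.neighborFinset u ∩ G.neighborFinset v) := by
  rw [triEdge, Finset.filter_and, ← neighborFinset_eq_filter, ← neighborFinset_eq_filter]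

lemma nCloser_add_triEdge_of_ediam_le_two (h : G.ediam ≤ 2) {u v : V} (huv : G.Adj u v) :
    nCloser G u v + triEdge G u v = G.degree u := by
  have hcloser : nCloser G u v = #(G.neighborFinset u \ insert v (G.neighborFinset v)) + 1 := by
    rw [nCloser, filter_dist_lt_dist_eq_of_ediam_le_two h huv,
      Finset.card_insert_of_notMem (by simp)]
  have hcommon : G.neighborFinset u ∩ insert v (G.neighborFinset v) =
      insert v (G.neighborFinset u ∩ G.neighborFinset v) :=
    Finset.inter_insert_of_mem (by simpa using huv)
  have hsplit :=
    Finset.card_sdiff_add_card_inter (G.neighborFinset u) (insert v (G.neighborFinset v))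
  rw [hcommon, Finset.card_insert_of_notMem (by simp), card_neighborFinset_eq_degree] at hsplit
  rw [hcloser, triEdge_eq_card_neighborFinset_inter]
  omega

lemma triEdge_eq_card_filter_cliqueFinset {u v : V} (huv : G.Adj u v) :
    triEdge G u v = #{s ∈ G.cliqueFinset 3 | u ∈ s ∧ v ∈ s} := by
  have hinj : Set.InjOn (fun w => ({u, v, w} : Finset V))
      ↑({w | G.Adj u w ∧ G.Adj v w} : Finset V) := by
    intro w hw w' _ hww'
    have hmem : w ∈ ({u, v, w'} : Finset V) := by
      rw [← show ({u, v, w} : Finset V) = {u, v, w'} from hww']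
      simp
    obtain ⟨huw, hvw⟩ : G.Adj u w ∧ G.Adj v w := by simpa using hw
    simp only [Finset.mem_insert, Finset.mem_singleton] at hmem
    rcases hmem with rfl | rfl | rfl
    · exact absurd huw G.irrefl
    · exact absurd hvw G.irrefl
    · rfl
  rw [triEdge, ← Finset.card_image_of_injOn hinj]
  congr 1
  ext s
  simp only [Finset.mem_filter, Finset.mem_image, mem_cliqueFinset_iff, Finset.mem_univ, true_and]
  constructor
  · rintro ⟨w, ⟨huw, hvw⟩, rfl⟩
    exact ⟨is3Clique_triple_iff.2 ⟨huv, huw, hvw⟩, by simp, by simp⟩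
  · rintro ⟨hs, hu, hv⟩
    have hv' : v ∈ s.erase u := Finset.mem_erase.2 ⟨huv.ne.symm, hv⟩
    have hcard : #((s.erase u).erase v) = 1 := by
      rw [Finset.card_erase_of_mem hv', Finset.card_erase_of_mem hu, hs.card_eq]
    obtain ⟨w, hw⟩ := Finset.card_eq_one.1 hcard
    have hs' : s = {u, v, w} := by
      rw [← Finset.insert_erase hu, ← Finset.insert_erase hv', hw]
    obtain ⟨-, huw, hvw⟩ := is3Clique_triple_iff.1 (hs' ▸ hs)
    exact ⟨w, ⟨huw, hvw⟩, hs'.symm⟩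

lemma card_filter_dart_mem_eq_six {s : Finset V} (hs : s ∈ G.cliqueFinset 3) :
    #{d : G.Dart | d.fst ∈ s ∧ d.snd ∈ s} = 6 := by
  have hs := mem_cliqueFinset_iff.1 hs
  calc #{d : G.Dart | d.fst ∈ s ∧ d.snd ∈ s} = #s.offDiag := by
        refine Finset.card_bij (fun d _ => d.toProd) ?_ ?_ ?_
        · intro d hd
          simp only [Finset.mem_filter, Finset.mem_univ, true_and] at hd
          exact Finset.mem_offDiag.2 ⟨hd.1, hd.2, d.adj.ne⟩
        · intro d _ d' _ h
          exact Dart.ext _ _ h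
        · intro p hp
          obtain ⟨h1, h2, hne⟩ := Finset.mem_offDiag.1 hp
          exact ⟨⟨p, hs.isClique h1 h2 hne⟩, by simp [h1, h2], rfl⟩
    _ = 6 := by rw [Finset.offDiag_card, hs.card_eq]

lemma sum_dart_triEdge : ∑ d : G.Dart, triEdge G d.fst d.snd = 6 * triCount G := by
  calc ∑ d : G.Dart, triEdge G d.fst d.snd
      = ∑ d : G.Dart, #{s ∈ G.cliqueFinset 3 | d.fst ∈ s ∧ d.snd ∈ s} :=
        Finset.sum_congr rfl fun d _ => triEdge_eq_card_filter_cliqueFinset d.adj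
    _ = ∑ s ∈ G.cliqueFinset 3, #{d : G.Dart | d.fst ∈ s ∧ d.snd ∈ s} :=
        Finset.sum_card_bipartiteAbove_eq_sum_card_bipartiteBelow
          (r := fun (d : G.Dart) s => d.fst ∈ s ∧ d.snd ∈ s)
    _ = 6 * triCount G := by
        rw [Finset.sum_congr rfl fun s hs => card_filter_dart_mem_eq_six hs, Finset.sum_const,
          smul_eq_mul, mul_comm, triCount]

theorem PIv_add_six_mul_triCount_of_ediam_le_two (h : G.ediam ≤ 2) :
    PIv G + 6 * triCount G = M1 G := by
  rw [PIv, sum_edgeFinset_lift_add_eq_sum_dart (nCloser G), ← sum_dart_triEdge,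
    ← Finset.sum_add_distrib, M1, ← sum_dart_degree_fst]
  exact Finset.sum_congr rfl fun d _ => nCloser_add_triEdge_of_ediam_le_two h d.adj

end PaperDefs

theorem stmt_8_general {V : Type*} [Fintype V] (G : SimpleGraph V)
    (hdiam : G.diam = 2) :
    (PIv G : ℤ) = M1 G - 6 * triCount G := by
  have hediam : G.ediam ≤ 2 := by
    rw [← ENat.natCast_toNat (SimpleGraph.ediam_ne_top_of_diam_ne_zero (hdiam ▸ two_ne_zero))]
    exact Nat.cast_le.2 hdiam.le
  rw [← PIv_add_six_mul_triCount_of_ediam_le_two hediam]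
  push_cast
  ring

/-- For a connected graph `G` of diameter `2`,
`PI_v(G) = M₁(G) - 6 t(G)`. -/
theorem stmt_8 {V : Type*} [Fintype V] (G : SimpleGraph V) (hG : G.Connected)
    (hdiam : G.diam = 2) :
    (PIv G : ℤ) = M1 G - 6 * triCount G :=
  stmt_8_general G hdiam
end

section
/- Let G be a connected simple graph. Then for every edge e = uv of G one has n_u(e) + n_v(e) ≥ deg(u) + deg(v) − 2·t(e), where t(e) is the number of triangles containing the edge e; consequently PI_v(G) ≥ M_1(G) − 6·t(G). -/
/-!
Distance-based topological indices (PI, vertex PI, Szeged, edge Szeged, Zagreb indices,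
triangle counts) for finite simple graphs, following Ilić, "Note on PI and Szeged indices".
-/

open scoped Classical
open Finset

open PaperDefs

/-!
For an edge `uv`, every vertex of the closed neighbourhood of `u` other than `v` and the common
neighbours of `u` and `v` is at distance at most one from `u` and at least two from `v`, so
`deg u ≤ n_u(e) + t(e)`. Summing `deg u + deg v` over the edges gives `M₁(G)`, each vertex being
counted once per incident edge, while `Σ_e t(e) ≤ 3 t(G)` by double counting the pairs
(edge, triangle containing it), a triangle having only three edges.
-/

theorem Sym2.toFinset_injective {α : Type*} [DecidableEq α] :
    Function.Injective (Sym2.toFinset : Sym2 α → Finset α) :=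
  fun _ _ h => Sym2.ext fun x => by rw [← Sym2.mem_toFinset, h, Sym2.mem_toFinset]

namespace SimpleGraph

variable {V : Type*} [Fintype V] (G : SimpleGraph V)

theorem sum_edgeFinset_lift_add {M : Type*} [AddCommMonoid M] (g : V → M) :
    ∑ e ∈ G.edgeFinset, Sym2.lift ⟨fun u v => g u + g v, fun _ _ => add_comm _ _⟩ e =
      ∑ v, G.degree v • g v := by
  have h_pair : ∀ e ∈ G.edgeFinset,
      Sym2.lift ⟨fun u v => g u + g v, fun _ _ => add_comm _ _⟩ e = ∑ a ∈ e.toFinset, g a := by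
    intro e he
    induction e using Sym2.ind with
    | _ u v =>
      rw [Sym2.lift_mk, Sym2.toFinset_mk_eq, sum_pair (G.ne_of_adj (G.mem_edgeFinset.1 he))]
  rw [sum_congr rfl h_pair, sum_comm' (t' := univ) (s' := fun a => G.incidenceFinset a)]
  · simp only [sum_const, card_incidenceFinset_eq_degree]
  · intro e a
    simp [mem_incidenceFinset, incidenceSet, and_comm]

theorem card_edgeFinset_filter_subset_le_choose_two (T : Finset V) :
    #{e ∈ G.edgeFinset | e.toFinset ⊆ T} ≤ (#T).choose 2 := by
  rw [← card_powersetCard]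
  refine card_le_card_of_injOn Sym2.toFinset (fun e he => ?_) Sym2.toFinset_injective.injOn
  obtain ⟨he, heT⟩ := mem_filter.1 he
  exact mem_powersetCard.2 ⟨heT,
    Sym2.card_toFinset_of_not_isDiag e (G.not_isDiag_of_mem_edgeSet (G.mem_edgeFinset.1 he))⟩

end SimpleGraph

namespace PaperDefs

variable {V : Type*} [Fintype V] (G : SimpleGraph V)

theorem sum_edgeFinset_lift_degree_add_degree :
    ∑ e ∈ G.edgeFinset,
      Sym2.lift ⟨fun u v => G.degree u + G.degree v, fun _ _ => add_comm _ _⟩ e = M1 G := by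
  rw [G.sum_edgeFinset_lift_add, M1]
  simp only [smul_eq_mul, sq]

theorem triEdge_comm (u v : V) : triEdge G u v = triEdge G v u := by
  simp only [triEdge, and_comm]

theorem degree_le_nCloser_add_triEdge {u v : V} (huv : G.Adj u v) :
    G.degree u ≤ nCloser G u v + triEdge G u v := by
  have h_closed_nbhd : insert u (G.neighborFinset u) ⊆
      ({w | G.dist w u < G.dist w v} : Finset V) ∪
        insert v ({w | G.Adj u w ∧ G.Adj v w} : Finset V) := by
    intro w hw
    simp only [mem_insert, SimpleGraph.mem_neighborFinset] at hw
    simp only [mem_union, mem_insert, mem_filter, mem_univ, true_and]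
    rcases hw with rfl | huw
    · left
      simp [SimpleGraph.dist_eq_one_iff_adj.2 huv]
    by_cases hvw : w = v ∨ G.Adj v w
    · exact Or.inr (hvw.imp id fun h => ⟨huw, h⟩)
    rw [not_or] at hvw
    left
    rw [SimpleGraph.dist_eq_one_iff_adj.2 huw.symm]
    exact (huw.symm.reachable.trans huv.reachable).one_lt_dist_of_ne_of_not_adj hvw.1
      fun h => hvw.2 h.symm
  have h_card := (card_le_card h_closed_nbhd).trans (card_union_le _ _)
  rw [card_insert_of_notMem (G.notMem_neighborFinset_self u), G.card_neighborFinset_eq_degree]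
    at h_card
  have := card_insert_le v ({w | G.Adj u w ∧ G.Adj v w} : Finset V)
  rw [nCloser, triEdge]
  omega

theorem triEdge_le_card_triangles_containing {u v : V} (huv : G.Adj u v) :
    triEdge G u v ≤ #{T ∈ G.cliqueFinset 3 | s(u, v).toFinset ⊆ T} := by
  refine card_le_card_of_injOn (fun w => insert w {u, v}) (fun w hw => ?_) fun w hw w' _ h => ?_
  · obtain ⟨huw, hvw⟩ := (mem_filter.1 hw).2
    rw [mem_coe, mem_filter, SimpleGraph.mem_cliqueFinset_iff, Sym2.toFinset_mk_eq]
    exact ⟨SimpleGraph.is3Clique_triple_iff.2 ⟨huw.symm, hvw.symm, huv⟩, subset_insert _ _⟩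
  · obtain ⟨huw, hvw⟩ := (mem_filter.1 hw).2
    have hw_notMem : w ∉ ({u, v} : Finset V) := by
      simp only [mem_insert, mem_singleton, not_or]
      exact ⟨huw.ne.symm, hvw.ne.symm⟩
    exact (insert_inj hw_notMem).1 h

theorem sum_edgeFinset_lift_triEdge_le :
    ∑ e ∈ G.edgeFinset, Sym2.lift ⟨triEdge G, triEdge_comm G⟩ e ≤ 3 * triCount G := by
  calc ∑ e ∈ G.edgeFinset, Sym2.lift ⟨triEdge G, triEdge_comm G⟩ e
      ≤ ∑ e ∈ G.edgeFinset, #{T ∈ G.cliqueFinset 3 | e.toFinset ⊆ T} := by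
        refine sum_le_sum fun e he => ?_
        induction e using Sym2.ind with
        | _ u v => exact triEdge_le_card_triangles_containing G (G.mem_edgeFinset.1 he)
    _ = ∑ T ∈ G.cliqueFinset 3, #{e ∈ G.edgeFinset | e.toFinset ⊆ T} :=
        sum_card_bipartiteAbove_eq_sum_card_bipartiteBelow _
    _ ≤ ∑ T ∈ G.cliqueFinset 3, 3 := sum_le_sum fun T hT => by
        simpa [(G.mem_cliqueFinset_iff.1 hT).card_eq] using
          G.card_edgeFinset_filter_subset_le_choose_two T
    _ = 3 * triCount G := by rw [sum_const, smul_eq_mul, mul_comm, triCount]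

end PaperDefs

theorem stmt_9_general {V : Type*} [Fintype V] (G : SimpleGraph V) :
    (∀ u v : V, G.Adj u v →
        (G.degree u + G.degree v : ℤ) - 2 * triEdge G u v ≤
          nCloser G u v + nCloser G v u) ∧
      (M1 G : ℤ) - 6 * triCount G ≤ PIv G := by
  have h_edge (u v : V) (huv : G.Adj u v) :
      G.degree u + G.degree v ≤ nCloser G u v + nCloser G v u + 2 * triEdge G u v := by
    have := degree_le_nCloser_add_triEdge G huv
    have := degree_le_nCloser_add_triEdge G huv.symm
    rw [triEdge_comm] at this
    omega
  refine ⟨fun u v huv => by have := h_edge u v huv; omega, ?_⟩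
  have h_sum :
      M1 G ≤ PIv G + 2 * ∑ e ∈ G.edgeFinset, Sym2.lift ⟨triEdge G, triEdge_comm G⟩ e := by
    rw [← sum_edgeFinset_lift_degree_add_degree, PIv, mul_sum, ← sum_add_distrib]
    refine sum_le_sum fun e he => ?_
    induction e using Sym2.ind with
    | _ u v => exact h_edge u v (G.mem_edgeFinset.1 he)
  have := sum_edgeFinset_lift_triEdge_le G
  omega

/-- In a connected graph, every edge `e = uv` satisfies
`n_u(e) + n_v(e) ≥ deg(u) + deg(v) - 2 t(e)`; consequently `PI_v(G) ≥ M₁(G) - 6 t(G)`. -/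
theorem stmt_9 {V : Type*} [Fintype V] (G : SimpleGraph V) (hG : G.Connected) :
    (∀ u v : V, G.Adj u v →
        (G.degree u + G.degree v : ℤ) - 2 * triEdge G u v ≤
          nCloser G u v + nCloser G v u) ∧
      (M1 G : ℤ) - 6 * triCount G ≤ PIv G :=
  stmt_9_general G
end

section
/- Let G be a connected strongly regular graph SRG(v, k, λ, μ) with μ ≥ 1 that is not complete, and let m = vk/2 be its number of edges. Then PI_v(G) = v·k² − v·k·λ and Sz(G) = m·k² − 2·m·k·λ + m·λ². -/
/-!
Distance-based topological indices (PI, vertex PI, Szeged, edge Szeged, Zagreb indices,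
triangle counts) for finite simple graphs, following Ilić, "Note on PI and Szeged indices".
-/

open scoped Classical
open Finset

open PaperDefs

/-!
Since `μ ≥ 1`, any two distinct non-adjacent vertices have a common neighbour, so `G` has
diameter at most 2 and `d(x, y)` is 0, 1 or 2 according as `x = y`, `x ~ y`, or neither.
Hence for an edge `uw` the vertices closer to `u` than to `w` are `u` itself and the
neighbours of `u` other than `w` that are not adjacent to `w`: `n_u(e) = 1 + (k - 1 - λ) = k - λ`
for every edge. Summing over the `m` edges and using `vk = 2m` gives both formulas.
-/

namespace SimpleGraph

variable {V : Type*} {G : SimpleGraph V} {u w : V}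

lemma dist_eq_ite_of_ediam_le_two (hdiam : G.ediam ≤ 2) (u v : V) :
    G.dist u v = if u = v then 0 else if G.Adj u v then 1 else 2 := by
  split_ifs with huv hadj
  · simp [huv]
  · exact dist_eq_one_iff_adj.mpr hadj
  · have hle : ¬2 < G.edist u v := (edist_le_ediam.trans hdiam).not_gt
    rw [two_lt_edist_iff] at hle
    have hc : (G.commonNeighbors u v).Nonempty := Set.nonempty_iff_ne_empty.mpr (by tauto)
    rw [dist, edist_eq_two_iff.mpr ⟨huv, hadj, hc⟩]
    rfl

variable [Fintype V]

/-- Counting edges by `Nat.card` keeps the statement independent of the `Fintype G.edgeSet`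
instance, which is the classical one inside `PIv` and `Sz` but comes from `DecidableRel G.Adj`
in the theorem. -/
lemma sum_edgeFinset_lift_cast_eq {R : Type*} [NonAssocSemiring R]
    (f : {f : V → V → ℕ // ∀ a b, f a b = f b a}) {c : R}
    (h : ∀ u w, G.Adj u w → (f.1 u w : R) = c) :
    ((∑ e ∈ G.edgeFinset, Sym2.lift f e : ℕ) : R) = Nat.card G.edgeSet * c := by
  rw [Nat.cast_sum, sum_congr rfl (g := fun _ => c), sum_const, nsmul_eq_mul, edgeFinset_card,
    Nat.card_eq_fintype_card]
  intro e he
  induction e using Sym2.ind with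
  | h u w => exact h u w (mem_edgeFinset.mp he)

variable [DecidableRel G.Adj]

lemma filter_dist_lt_eq_of_ediam_le_two (hdiam : G.ediam ≤ 2) (huw : G.Adj u w) :
    univ.filter (fun x => G.dist x u < G.dist x w) =
      insert u ((G.neighborFinset u).filter fun x => ¬(x = w ∨ G.Adj w x)) := by
  ext x
  simp only [mem_filter, mem_univ, true_and, dist_eq_ite_of_ediam_le_two hdiam,
    mem_insert, mem_neighborFinset]
  by_cases hxu : x = u
  · simp [hxu, huw, huw.ne]
  by_cases hxw : x = w
  · simp [hxw, huw.ne.symm]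
  by_cases hux : G.Adj u x <;> by_cases hwx : G.Adj w x <;> simp [*, adj_comm]

lemma filter_adj_or_eq_eq_insert_commonNeighbors (huw : G.Adj u w) :
    (G.neighborFinset u).filter (fun x => x = w ∨ G.Adj w x) =
      insert w (G.commonNeighbors u w).toFinset := by
  ext x
  simp only [mem_filter, mem_neighborFinset, mem_insert, Set.mem_toFinset, mem_commonNeighbors]
  constructor
  · rintro ⟨hux, rfl | hwx⟩ <;> tauto
  · rintro (rfl | hx) <;> tauto

lemma IsRegularOfDegree.card_mul_eq_two_mul_card_edgeFinset {k : ℕ} (h : G.IsRegularOfDegree k) :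
    Fintype.card V * k = 2 * #G.edgeFinset := by
  rw [← sum_degrees_eq_twice_card_edges, sum_congr rfl fun v _ => h v, sum_const, card_univ,
    smul_eq_mul]

namespace IsSRGWith

variable {n k ℓ μ : ℕ}

lemma ediam_le_two (h : G.IsSRGWith n k ℓ μ) (hμ : μ ≠ 0) : G.ediam ≤ 2 := by
  refine ediam_le_of_edist_le fun u v => not_lt.mp fun hlt => hμ ?_
  obtain ⟨hne, hna, hc⟩ := two_lt_edist_iff.mp hlt
  simpa [hc] using (h.of_not_adj hne hna).symm

end IsSRGWith

end SimpleGraph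

namespace PaperDefs

open SimpleGraph

variable {V : Type*} [Fintype V] {G : SimpleGraph V} {u w : V}

lemma PIv_eq_of_nCloser_eq {c : ℤ} (h : ∀ u w, G.Adj u w → (nCloser G u w : ℤ) = c) :
    (PIv G : ℤ) = Nat.card G.edgeSet * (2 * c) :=
  G.sum_edgeFinset_lift_cast_eq _ fun u w huw => by
    push_cast
    rw [h u w huw, h w u huw.symm]
    ring

lemma Sz_eq_of_nCloser_eq {c : ℤ} (h : ∀ u w, G.Adj u w → (nCloser G u w : ℤ) = c) :
    (Sz G : ℤ) = Nat.card G.edgeSet * c ^ 2 :=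
  G.sum_edgeFinset_lift_cast_eq _ fun u w huw => by
    push_cast
    rw [h u w huw, h w u huw.symm]
    ring

section DecidableAdj

variable [DecidableRel G.Adj]

theorem nCloser_add_card_commonNeighbors (hdiam : G.ediam ≤ 2) (huw : G.Adj u w) :
    nCloser G u w + Fintype.card (G.commonNeighbors u w) = G.degree u := by
  have hu : u ∉ (G.neighborFinset u).filter fun x => ¬(x = w ∨ G.Adj w x) := by simp
  have hw : w ∉ (G.commonNeighbors u w).toFinset := by simp [notMem_commonNeighbors_right]
  rw [nCloser, filter_dist_lt_eq_of_ediam_le_two hdiam huw, card_insert_of_notMem hu,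
    ← Set.toFinset_card, ← card_neighborFinset_eq_degree,
    ← card_filter_add_card_filter_not (s := G.neighborFinset u) (fun x => x = w ∨ G.Adj w x),
    filter_adj_or_eq_eq_insert_commonNeighbors huw, card_insert_of_notMem hw]
  ring

theorem _root_.SimpleGraph.IsSRGWith.nCloser_eq {n k ℓ μ : ℕ} (h : G.IsSRGWith n k ℓ μ)
    (hμ : μ ≠ 0) (huw : G.Adj u w) :
    (nCloser G u w : ℤ) = k - ℓ := by
  have := nCloser_add_card_commonNeighbors (h.ediam_le_two hμ) huw
  rw [h.of_adj u w huw, h.regular u] at this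
  omega

end DecidableAdj

end PaperDefs

theorem stmt_11_general {V : Type*} [Fintype V] (G : SimpleGraph V) [DecidableRel G.Adj]
    (v k l μ : ℕ) (hsrg : G.IsSRGWith v k l μ)
    (hμ : 1 ≤ μ) (m : ℕ) (hm : m = G.edgeFinset.card) :
    (PIv G : ℤ) = v * k ^ 2 - v * k * l ∧
      (Sz G : ℤ) = m * k ^ 2 - 2 * m * k * l + m * l ^ 2 := by
  have hμ0 : μ ≠ 0 := by omega
  have handshake : (v * k : ℤ) = 2 * m := by
    rw [← hsrg.card, hm]
    exact_mod_cast hsrg.regular.card_mul_eq_two_mul_card_edgeFinset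
  have hm' : (m : ℤ) = Nat.card G.edgeSet := by
    rw [hm, Nat.card_eq_fintype_card, G.edgeFinset_card]
  have hn : ∀ u w, G.Adj u w → (nCloser G u w : ℤ) = k - l := fun _ _ => hsrg.nCloser_eq hμ0
  rw [PIv_eq_of_nCloser_eq hn, Sz_eq_of_nCloser_eq hn, ← hm']
  constructor
  · linear_combination (l - k : ℤ) * handshake
  · ring

/-- For a connected, non-complete strongly regular graph `SRG(v, k, λ, μ)`
with `μ ≥ 1` and `m` edges, `PI_v(G) = v k² - v k λ` and `Sz(G) = m k² - 2 m k λ + m λ²`. -/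
theorem stmt_11 {V : Type*} [Fintype V] (G : SimpleGraph V) [DecidableRel G.Adj]
    (hG : G.Connected) (v k l μ : ℕ) (hsrg : G.IsSRGWith v k l μ)
    (hμ : 1 ≤ μ) (hnc : G ≠ ⊤) (m : ℕ) (hm : m = G.edgeFinset.card) :
    (PIv G : ℤ) = v * k ^ 2 - v * k * l ∧
      (Sz G : ℤ) = m * k ^ 2 - 2 * m * k * l + m * l ^ 2 :=
  stmt_11_general G v k l μ hsrg hμ m hm
end

section
/- Let G be a connected simple graph with n vertices and m edges. Then PI_v(G) ≤ n·m − 3·t(G). -/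
/-!
Distance-based topological indices (PI, vertex PI, Szeged, edge Szeged, Zagreb indices,
triangle counts) for finite simple graphs, following Ilić, "Note on PI and Szeged indices".
-/

open scoped Classical
open Finset

open PaperDefs

/-!
For an edge `uv`, the vertices closer to `u`, those closer to `v`, and the common neighbours of
`u` and `v` (which are equidistant from both) form three disjoint sets, so
`n_u + n_v + t(uv) ≤ n`. Summing over the edges gives `PI_v(G) + Σ_e t(e) ≤ n m`, and
`Σ_e t(e) = 3 t(G)` by double counting incidences between edges and triangles.
-/

open SimpleGraph

namespace PaperDefs

variable {V : Type*} [Fintype V] (G : SimpleGraph V)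

theorem nCloser_add_nCloser_add_triEdge_le_card (u v : V) :
    nCloser G u v + nCloser G v u + triEdge G u v ≤ Fintype.card V := by
  set A := univ.filter fun w => G.dist w u < G.dist w v
  set B := univ.filter fun w => G.dist w v < G.dist w u
  set C := univ.filter fun w => G.Adj u w ∧ G.Adj v w
  have hAB : Disjoint A B := by
    rw [Finset.disjoint_left]
    intro w hA hB
    simp only [A, B, mem_filter] at hA hB
    omega
  have hABC : Disjoint (A ∪ B) C := by
    rw [Finset.disjoint_left]
    intro w hAB hC
    simp only [C, mem_filter] at hC
    have hu : G.dist w u = 1 := dist_eq_one_iff_adj.mpr hC.2.1.symm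
    have hv : G.dist w v = 1 := dist_eq_one_iff_adj.mpr hC.2.2.symm
    simp only [A, B, mem_union, mem_filter] at hAB
    omega
  calc nCloser G u v + nCloser G v u + triEdge G u v = #(A ∪ B ∪ C) := by
        rw [card_union_of_disjoint hABC, card_union_of_disjoint hAB]; rfl
    _ ≤ Fintype.card V := card_le_univ _

theorem card_cliqueFinset_three_filter_mem_sym2_of_adj {u v : V} (huv : G.Adj u v) :
    #{T ∈ G.cliqueFinset 3 | s(u, v) ∈ T.sym2} = triEdge G u v := by
  symm
  refine card_bij (fun w _ => ({u, v, w} : Finset V)) ?_ ?_ ?_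
  · intro w hw
    simp only [mem_filter, mem_univ, true_and] at hw
    simp [mem_cliqueFinset_iff, is3Clique_triple_iff, huv, hw.1, hw.2]
  · intro w hw w' _ hww'
    simp only [mem_filter, mem_univ, true_and] at hw
    have : w ∈ ({u, v, w'} : Finset V) := hww' ▸ by simp
    simp only [mem_insert, mem_singleton] at this
    rcases this with rfl | rfl | rfl
    · exact absurd hw.1 (G.loopless.irrefl _)
    · exact absurd hw.2 (G.loopless.irrefl _)
    · rfl
  · intro T hT
    simp only [mem_filter, mem_cliqueFinset_iff, mk_mem_sym2_iff] at hT
    obtain ⟨hT, hu, hv⟩ := hT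
    have hcard : #(T \ {u, v}) = 1 := by
      rw [card_sdiff_of_subset (by simp [insert_subset_iff, hu, hv]), hT.card_eq,
        card_pair huv.ne]
    obtain ⟨w, hw⟩ := card_eq_one.mp hcard
    have hwT : w ∈ T \ {u, v} := by simp [hw]
    simp only [mem_sdiff, mem_insert, mem_singleton, not_or] at hwT
    obtain ⟨hwT, hwu, hwv⟩ := hwT
    refine ⟨w, ?_, ?_⟩
    · simp [hT.isClique hu hwT (Ne.symm hwu), hT.isClique hv hwT (Ne.symm hwv)]
    · refine eq_of_subset_of_card_le (by simp [insert_subset_iff, hu, hv, hwT]) ?_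
      rw [hT.card_eq, card_eq_three.mpr ⟨u, v, w, huv.ne, Ne.symm hwu, Ne.symm hwv, rfl⟩]

theorem card_edgeFinset_filter_mem_sym2_of_mem_cliqueFinset {T : Finset V}
    (hT : T ∈ G.cliqueFinset 3) : #{e ∈ G.edgeFinset | e ∈ T.sym2} = 3 := by
  obtain ⟨a, b, c, hab, hac, hbc, rfl⟩ := is3Clique_iff.mp (mem_cliqueFinset_iff.mp hT)
  have hedges : ({e ∈ G.edgeFinset | e ∈ ({a, b, c} : Finset V).sym2} : Finset (Sym2 V)) =
      {s(a, b), s(a, c), s(b, c)} := by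
    ext e
    induction e using Sym2.inductionOn with | hf x y => ?_
    simp only [mem_filter, mem_edgeFinset, mem_edgeSet, mk_mem_sym2_iff, mem_insert,
      mem_singleton, Sym2.eq_iff]
    constructor
    · rintro ⟨hxy, (rfl | rfl | rfl), (rfl | rfl | rfl)⟩ <;> simp_all
    · rintro ((⟨rfl, rfl⟩ | ⟨rfl, rfl⟩) | (⟨rfl, rfl⟩ | ⟨rfl, rfl⟩) |
          (⟨rfl, rfl⟩ | ⟨rfl, rfl⟩)) <;> simp_all [G.adj_comm]
  rw [hedges]
  refine card_eq_three.mpr ⟨_, _, _, ?_, ?_, ?_, rfl⟩ <;> simp [hab.ne, hac.ne, hbc.ne]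

theorem sum_card_cliqueFinset_three_filter_mem_sym2 :
    ∑ e ∈ G.edgeFinset, #{T ∈ G.cliqueFinset 3 | e ∈ T.sym2} = 3 * triCount G :=
  calc ∑ e ∈ G.edgeFinset, #{T ∈ G.cliqueFinset 3 | e ∈ T.sym2}
      = ∑ T ∈ G.cliqueFinset 3, #{e ∈ G.edgeFinset | e ∈ T.sym2} :=
        sum_card_bipartiteAbove_eq_sum_card_bipartiteBelow _
    _ = ∑ _T ∈ G.cliqueFinset 3, 3 :=
        sum_congr rfl fun _ hT => card_edgeFinset_filter_mem_sym2_of_mem_cliqueFinset G hT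
    _ = 3 * triCount G := by rw [sum_const, smul_eq_mul, mul_comm, triCount]

theorem PIv_add_three_mul_triCount_le :
    PIv G + 3 * triCount G ≤ Fintype.card V * #G.edgeFinset :=
  calc PIv G + 3 * triCount G
      = ∑ e ∈ G.edgeFinset,
          (Sym2.lift ⟨fun u v => nCloser G u v + nCloser G v u, fun _ _ => add_comm _ _⟩ e
            + #{T ∈ G.cliqueFinset 3 | e ∈ T.sym2}) := by
        rw [PIv, sum_add_distrib, sum_card_cliqueFinset_three_filter_mem_sym2]
    _ ≤ ∑ _e ∈ G.edgeFinset, Fintype.card V := by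
        refine sum_le_sum fun e he => ?_
        induction e using Sym2.inductionOn with | hf u v => ?_
        rw [Sym2.lift_mk, card_cliqueFinset_three_filter_mem_sym2_of_adj G (mem_edgeFinset.mp he)]
        exact nCloser_add_nCloser_add_triEdge_le_card G u v
    _ = Fintype.card V * #G.edgeFinset := by rw [sum_const, smul_eq_mul, mul_comm]

end PaperDefs

theorem stmt_12_general {V : Type*} [Fintype V] (G : SimpleGraph V) :
    (PIv G : ℤ) ≤ Fintype.card V * G.edgeFinset.card - 3 * triCount G := by
  have h := PIv_add_three_mul_triCount_le G
  zify at h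
  linarith

/-- For a connected graph `G` with `n` vertices and `m` edges,
`PI_v(G) ≤ n m - 3 t(G)`. -/
theorem stmt_12 {V : Type*} [Fintype V] (G : SimpleGraph V) (hG : G.Connected) :
    (PIv G : ℤ) ≤ Fintype.card V * G.edgeFinset.card - 3 * triCount G :=
  stmt_12_general G
end

section
/- Let G be a connected triangle-free simple graph with n ≥ 3 vertices. Then Sz(G) ≥ M_2(G), with equality if and only if G has diameter 2. -/
/-!
Distance-based topological indices (PI, vertex PI, Szeged, edge Szeged, Zagreb indices,
triangle counts) for finite simple graphs, following Ilić, "Note on PI and Szeged indices".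
-/

open scoped Classical
open Finset

open PaperDefs

/-!
For an edge `uv` of a triangle-free graph, `u` and its neighbours other than `v` are strictly
closer to `u` than to `v` (a neighbour of both would close a triangle), so `n_u(e) ≥ deg u`;
multiplying and summing over the edges gives `Sz(G) ≥ M₂(G)`. If every vertex is within
distance `2` of `v`, a vertex closer to `u` is within distance `1` of `u`, so these are all of
them and equality holds. If the diameter is at least `3`, take `x, y` at maximal distance and
`u` the neighbour of `y` on a shortest `x`–`y` path: then `x` is closer to `u` than to `y` but
is not a neighbour of `u`, so the term of the edge `uy` is strict. Triangle-freeness with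
`n ≥ 3` excludes `G = K_n`, i.e. diameter `1`.
-/

namespace SimpleGraph

variable {V : Type*} {G : SimpleGraph V}

lemma exists_adj_dist_eq_of_dist_eq_succ {x y : V} {n : ℕ} (h : G.dist x y = n + 1) :
    ∃ u, G.Adj u y ∧ G.dist x u = n := by
  have hreach : G.Reachable x y := Reachable.of_dist_ne_zero (by omega)
  have hxy : x ≠ y := by rintro rfl; simp at h
  obtain ⟨p, hp⟩ := hreach.exists_walk_length_eq_dist
  obtain ⟨u, hadj, q, hq⟩ := Walk.exists_eq_cons_of_ne hxy.symm p.reverse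
  have hq_len : q.length = n := by
    have := congrArg Walk.length hq
    rw [Walk.length_reverse, Walk.length_cons] at this
    omega
  have hle : G.dist x u ≤ n := by simpa [hq_len] using dist_le q.reverse
  have hge : n ≤ G.dist x u := by
    have := hadj.symm.reachable.dist_triangle_right x
    rw [dist_eq_one_iff_adj.mpr hadj.symm] at this
    omega
  exact ⟨u, hadj.symm, le_antisymm hle hge⟩

lemma two_le_diam_of_cliqueFree_three [Fintype V] (hG : G.Connected)
    (hn : 3 ≤ Fintype.card V) (htf : G.CliqueFree 3) : 2 ≤ G.diam := by
  have : Nontrivial V := Fintype.one_lt_card_iff_nontrivial.mp (by omega)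
  have h0 : G.diam ≠ 0 := connected_iff_diam_ne_zero.mp hG
  have h1 : G.diam ≠ 1 := by
    rw [Ne, diam_eq_one]
    rintro rfl
    exact (IsContained.refl _).not_cliqueFree_card (htf.mono hn)
  omega

variable [Fintype G.edgeSet] {M : Type*} [AddCommMonoid M] [PartialOrder M]
  [IsOrderedCancelAddMonoid M] {f g : {f : V → V → M // ∀ a b, f a b = f b a}}

lemma sum_edgeFinset_lift_le (h : ∀ u v, G.Adj u v → f.1 u v ≤ g.1 u v) :
    ∑ e ∈ G.edgeFinset, Sym2.lift f e ≤ ∑ e ∈ G.edgeFinset, Sym2.lift g e := by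
  refine sum_le_sum fun e he => ?_
  induction e using Sym2.ind with
  | _ u v => exact h u v (by simpa using he)

lemma sum_edgeFinset_lift_eq_iff (h : ∀ u v, G.Adj u v → f.1 u v ≤ g.1 u v) :
    ∑ e ∈ G.edgeFinset, Sym2.lift f e = ∑ e ∈ G.edgeFinset, Sym2.lift g e ↔
      ∀ u v, G.Adj u v → f.1 u v = g.1 u v := by
  rw [sum_eq_sum_iff_of_le fun e he => ?_]
  · refine ⟨fun H u v huv => H s(u, v) (by simpa), fun H e he => ?_⟩
    induction e using Sym2.ind with
    | _ u v => exact H u v (by simpa using he)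
  · induction e using Sym2.ind with
    | _ u v => exact h u v (by simpa using he)

end SimpleGraph

namespace PaperDefs

open SimpleGraph

variable {V : Type*} [Fintype V] {G : SimpleGraph V} {u v : V}

lemma card_insert_erase_neighborFinset (huv : G.Adj u v) :
    #(insert u ((G.neighborFinset u).erase v)) = G.degree u := by
  have hv : v ∈ G.neighborFinset u := by simpa
  have hdeg : 0 < G.degree u := (G.degree_pos_iff_exists_adj u).mpr ⟨v, huv⟩
  rw [card_insert_of_notMem (by simp), card_erase_of_mem hv, card_neighborFinset_eq_degree]
  omega

lemma insert_erase_neighborFinset_subset_closer (htf : G.CliqueFree 3) (huv : G.Adj u v) :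
    insert u ((G.neighborFinset u).erase v) ⊆ univ.filter fun w => G.dist w u < G.dist w v := by
  intro w hw
  simp only [mem_insert, mem_erase, mem_neighborFinset] at hw
  simp only [mem_filter, mem_univ, true_and]
  rcases hw with rfl | ⟨hwv, huw⟩
  · simpa using huv.reachable.pos_dist_of_ne huv.ne
  · have hnadj : ¬ G.Adj w v := fun hwv' =>
      htf {u, v, w} (is3Clique_triple_iff.mpr ⟨huv, huw, hwv'.symm⟩)
    have := (huw.symm.reachable.trans huv.reachable).one_lt_dist_of_ne_of_not_adj hwv hnadj
    simpa [dist_eq_one_iff_adj.mpr huw.symm]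

lemma degree_le_nCloser (htf : G.CliqueFree 3) (huv : G.Adj u v) :
    G.degree u ≤ nCloser G u v := by
  rw [nCloser, ← card_insert_erase_neighborFinset huv]
  exact card_le_card (insert_erase_neighborFinset_subset_closer htf huv)

lemma degree_lt_nCloser_of_two_le_dist (htf : G.CliqueFree 3) (huv : G.Adj u v) {x : V}
    (hxu : 2 ≤ G.dist x u) (hcloser : G.dist x u < G.dist x v) :
    G.degree u < nCloser G u v := by
  have hx : x ∉ insert u ((G.neighborFinset u).erase v) := by
    simp only [mem_insert, mem_erase, mem_neighborFinset, not_or, not_and]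
    refine ⟨?_, fun _ hux => ?_⟩
    · rintro rfl; simp at hxu
    · simp [dist_eq_one_iff_adj.mpr hux.symm] at hxu
  rw [nCloser, ← card_insert_erase_neighborFinset huv, Nat.lt_iff_add_one_le,
    ← card_insert_of_notMem hx]
  exact card_le_card <|
    insert_subset (by simpa) (insert_erase_neighborFinset_subset_closer htf huv)

lemma nCloser_le_degree_of_forall_dist_le_two (hd : ∀ w, G.dist w v ≤ 2) (huv : G.Adj u v) :
    nCloser G u v ≤ G.degree u := by
  rw [nCloser, ← card_insert_erase_neighborFinset huv]
  refine card_le_card fun w hw => ?_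
  simp only [mem_filter, mem_univ, true_and] at hw
  simp only [mem_insert, mem_erase, mem_neighborFinset]
  have hwu : G.Reachable w u := (Reachable.of_dist_ne_zero (by omega)).trans huv.symm.reachable
  have := hd w
  rcases Nat.lt_or_ge (G.dist w u) 1 with h0 | h1
  · exact .inl ((hwu.dist_eq_zero_iff).mp (by omega))
  · refine .inr ⟨?_, (dist_eq_one_iff_adj.mp (by omega)).symm⟩
    rintro rfl
    simp [dist_eq_one_iff_adj.mpr huv.symm] at hw

lemma degree_mul_degree_le_nCloser_mul_nCloser (htf : G.CliqueFree 3) (huv : G.Adj u v) :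
    G.degree u * G.degree v ≤ nCloser G u v * nCloser G v u :=
  Nat.mul_le_mul (degree_le_nCloser htf huv) (degree_le_nCloser htf huv.symm)

lemma M2_le_Sz (htf : G.CliqueFree 3) : M2 G ≤ Sz G :=
  sum_edgeFinset_lift_le fun _ _ => degree_mul_degree_le_nCloser_mul_nCloser htf

lemma Sz_eq_M2_iff (htf : G.CliqueFree 3) :
    Sz G = M2 G ↔ ∀ u v, G.Adj u v → nCloser G u v = G.degree u := by
  rw [eq_comm, M2, Sz,
    sum_edgeFinset_lift_eq_iff fun _ _ => degree_mul_degree_le_nCloser_mul_nCloser htf]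
  refine ⟨fun h u v huv => ?_, fun h u v huv => by simp only [h u v huv, h v u huv.symm]⟩
  have hprod : G.degree u * G.degree v = nCloser G u v * nCloser G v u := h u v huv
  have hv : 0 < G.degree v := (G.degree_pos_iff_exists_adj v).mpr ⟨u, huv.symm⟩
  refine (Nat.eq_of_mul_eq_mul_right hv (le_antisymm ?_ ?_)).symm
  · exact Nat.mul_le_mul_right _ (degree_le_nCloser htf huv)
  · exact hprod ▸ Nat.mul_le_mul_left _ (degree_le_nCloser htf huv.symm)

lemma forall_nCloser_eq_degree_iff_diam_le_two (hG : G.Connected) (htf : G.CliqueFree 3) :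
    (∀ u v, G.Adj u v → nCloser G u v = G.degree u) ↔ G.diam ≤ 2 := by
  have : Nonempty V := hG.nonempty
  refine ⟨fun h => ?_, fun hd u v huv => ?_⟩
  · by_contra! hd
    obtain ⟨x, y, hxy⟩ := G.exists_dist_eq_diam
    obtain ⟨u, huy, hxu⟩ : ∃ u, G.Adj u y ∧ G.dist x u = G.diam - 1 :=
      exists_adj_dist_eq_of_dist_eq_succ (by omega)
    exact (degree_lt_nCloser_of_two_le_dist htf huy (x := x) (by omega) (by omega)).ne' (h u y huy)
  · have hd' w : G.dist w v ≤ 2 := (dist_le_diam (connected_iff_ediam_ne_top.mp hG)).trans hd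
    exact (nCloser_le_degree_of_forall_dist_le_two hd' huv).antisymm (degree_le_nCloser htf huv)

end PaperDefs

/-- For a connected triangle-free graph `G` with `n ≥ 3` vertices,
`Sz(G) ≥ M₂(G)`, with equality iff `G` has diameter `2`. -/
theorem stmt_15 {V : Type*} [Fintype V] (G : SimpleGraph V) (hG : G.Connected)
    (hn : 3 ≤ Fintype.card V) (htf : G.CliqueFree 3) :
    M2 G ≤ Sz G ∧ (Sz G = M2 G ↔ G.diam = 2) := by
  have hdiam := G.two_le_diam_of_cliqueFree_three hG hn htf
  rw [Sz_eq_M2_iff htf, forall_nCloser_eq_degree_iff_diam_le_two hG htf]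
  exact ⟨M2_le_Sz htf, by omega⟩
end

section
/- (Pólya–Szegő inequality) Let a_1, …, a_n and b_1, …, b_n be positive real numbers such that a ≤ a_i ≤ A and b ≤ b_i ≤ B for all 1 ≤ i ≤ n, where 0 < a ≤ A and 0 < b ≤ B. Then (Σ_{i=1}^n a_i²)·(Σ_{i=1}^n b_i²) ≤ (1/4)·(√(AB/(ab)) + √(ab/(AB)))²·(Σ_{i=1}^n a_i b_i)². -/
/-!
Distance-based topological indices (PI, vertex PI, Szeged, edge Szeged, Zagreb indices,
triangle counts) for finite simple graphs, following Ilić, "Note on PI and Szeged indices".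
-/

open scoped Classical
open Finset

open PaperDefs

/-!
For `a ≤ x ≤ A` and `b ≤ y ≤ B` both factors of `(B x - a y) (A y - b x)` are nonnegative, which
expands to `b B x² + a A y² ≤ (A B + a b) x y`. Summing, and applying `4 u v ≤ (u + v)²` to
`u = b B ∑ xᵢ²`, `v = a A ∑ yᵢ²`, gives `4 A B a b ∑ xᵢ² ∑ yᵢ² ≤ (A B + a b)² (∑ xᵢ yᵢ)²`.
The constant `(A B + a b)² / (4 A B a b)` is `(1/4) (√(AB/(ab)) + √(ab/(AB)))²`.
-/

lemma one_div_four_mul_sq_sqrt_div_add_sqrt_div {p q : ℝ} (hp : 0 < p) (hq : 0 < q) :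
    1 / 4 * (Real.sqrt (p / q) + Real.sqrt (q / p)) ^ 2 = (p + q) ^ 2 / (4 * (p * q)) := by
  rw [Real.sqrt_div' p hq.le, Real.sqrt_div' q hp.le,
    div_add_div _ _ (by positivity) (by positivity), div_pow, ← sq, ← sq, mul_pow,
    Real.sq_sqrt hp.le, Real.sq_sqrt hq.le]
  field_simp

lemma mul_sq_add_mul_sq_le_of_mem_Icc {a A b B x y : ℝ} (ha : 0 ≤ a) (hb : 0 ≤ b)
    (hx : x ∈ Set.Icc a A) (hy : y ∈ Set.Icc b B) :
    b * B * x ^ 2 + a * A * y ^ 2 ≤ (A * B + a * b) * (x * y) := by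
  obtain ⟨hax, hxA⟩ := hx
  obtain ⟨hby, hyB⟩ := hy
  have h₁ : 0 ≤ B * x - a * y := by nlinarith
  have h₂ : 0 ≤ A * y - b * x := by nlinarith
  nlinarith [mul_nonneg h₁ h₂]

lemma mul_sum_sq_add_mul_sum_sq_le {ι : Type*} (s : Finset ι) {x y : ι → ℝ} {a A b B : ℝ}
    (ha : 0 ≤ a) (hb : 0 ≤ b) (hx : ∀ i ∈ s, x i ∈ Set.Icc a A)
    (hy : ∀ i ∈ s, y i ∈ Set.Icc b B) :
    b * B * ∑ i ∈ s, x i ^ 2 + a * A * ∑ i ∈ s, y i ^ 2 ≤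
      (A * B + a * b) * ∑ i ∈ s, x i * y i := by
  simp only [mul_sum, ← sum_add_distrib]
  exact sum_le_sum fun i hi => mul_sq_add_mul_sq_le_of_mem_Icc ha hb (hx i hi) (hy i hi)

theorem sum_sq_mul_sum_sq_le_of_mem_Icc {ι : Type*} (s : Finset ι) {x y : ι → ℝ}
    {a A b B : ℝ} (ha : 0 < a) (hb : 0 < b) (haA : a ≤ A) (hbB : b ≤ B)
    (hx : ∀ i ∈ s, x i ∈ Set.Icc a A) (hy : ∀ i ∈ s, y i ∈ Set.Icc b B) :
    (∑ i ∈ s, x i ^ 2) * ∑ i ∈ s, y i ^ 2 ≤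
      (A * B + a * b) ^ 2 / (4 * (A * B * (a * b))) * (∑ i ∈ s, x i * y i) ^ 2 := by
  have hA : 0 < A := ha.trans_le haA
  have hB : 0 < B := hb.trans_le hbB
  set u := b * B * ∑ i ∈ s, x i ^ 2
  set v := a * A * ∑ i ∈ s, y i ^ 2
  have key : 4 * (A * B * (a * b)) * ((∑ i ∈ s, x i ^ 2) * ∑ i ∈ s, y i ^ 2) ≤
      ((A * B + a * b) * ∑ i ∈ s, x i * y i) ^ 2 :=
    calc _ = 4 * u * v := by ring
      _ ≤ (u + v) ^ 2 := four_mul_le_sq_add u v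
      _ ≤ _ := pow_le_pow_left₀ (by positivity) (mul_sum_sq_add_mul_sum_sq_le s ha.le hb.le hx hy) 2
  rw [div_mul_eq_mul_div, le_div_iff₀ (by positivity), ← mul_pow]
  linarith

/-- **Pólya–Szegő inequality.** If `0 < a ≤ xᵢ ≤ A` and `0 < b ≤ yᵢ ≤ B`
for all `i`, then
`(Σ xᵢ²)(Σ yᵢ²) ≤ (1/4)(√(AB/(ab)) + √(ab/(AB)))² (Σ xᵢ yᵢ)²`. -/
theorem stmt_17 (n : ℕ) (x y : Fin n → ℝ) (a A b B : ℝ)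
    (ha : 0 < a) (haA : a ≤ A) (hb : 0 < b) (hbB : b ≤ B)
    (hx : ∀ i, a ≤ x i ∧ x i ≤ A) (hy : ∀ i, b ≤ y i ∧ y i ≤ B) :
    (∑ i, x i ^ 2) * (∑ i, y i ^ 2) ≤
      (1 / 4) * (Real.sqrt (A * B / (a * b)) + Real.sqrt (a * b / (A * B))) ^ 2 *
        (∑ i, x i * y i) ^ 2 := by
  rw [one_div_four_mul_sq_sqrt_div_add_sqrt_div
    (mul_pos (ha.trans_le haA) (hb.trans_le hbB)) (mul_pos ha hb)]
  exact sum_sq_mul_sum_sq_le_of_mem_Icc univ ha hb haA hbB (fun i _ => hx i) (fun i _ => hy i)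
end

section
/- Let G be a connected bipartite simple graph with n vertices and m edges. Then PI_v(G) = n·m. -/
/-!
Distance-based topological indices (PI, vertex PI, Szeged, edge Szeged, Zagreb indices,
triangle counts) for finite simple graphs, following Ilić, "Note on PI and Szeged indices".
-/

open scoped Classical
open Finset

open PaperDefs

/-!
In a bipartite graph the two endpoints of an edge lie in different colour classes, so their
distances from any vertex have different parities; in particular no vertex is equidistant from
them. Hence for every edge `uv` the vertices closer to `u` and those closer to `v` partition
`V`, each edge contributes `n` to `PI_v(G)`, and `PI_v(G) = n m`.
-/

namespace SimpleGraph

variable {V : Type*} {G : SimpleGraph V}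

/-- Shortest walks `w → u` and `w → v` of equal length `d`, joined through the edge `uv`,
would form a closed walk of odd length `2d + 1`. -/
theorem Colorable.dist_ne_of_adj (hbip : G.Colorable 2) {w u v : V} (hwu : G.Reachable w u)
    (huv : G.Adj u v) : G.dist w u ≠ G.dist w v := by
  intro hdist
  obtain ⟨p, hp⟩ := hwu.exists_walk_length_eq_dist
  obtain ⟨q, hq⟩ := (hwu.trans huv.reachable).exists_walk_length_eq_dist
  have hloop := two_colorable_iff_forall_loop_even.mp hbip w ((p.concat huv).append q.reverse)
  rw [Walk.length_append, Walk.length_concat, Walk.length_reverse, hp, hq, ← hdist] at hloop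
  exact Nat.not_even_iff_odd.mpr ⟨G.dist w u, by ring⟩ hloop

end SimpleGraph

namespace PaperDefs

variable {V : Type*} [Fintype V] {G : SimpleGraph V}

theorem nCloser_add_nCloser_of_forall_dist_ne {u v : V} (h : ∀ w, G.dist w u ≠ G.dist w v) :
    nCloser G u v + nCloser G v u = Fintype.card V := by
  have hcomplement : univ.filter (fun w => G.dist w v < G.dist w u)
      = univ.filter (fun w => ¬ G.dist w u < G.dist w v) :=
    filter_congr fun w _ => by have := h w; omega
  rw [nCloser, nCloser, hcomplement, card_filter_add_card_filter_not, card_univ]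

theorem PIv_eq_card_mul_of_forall_adj_dist_ne
    (h : ∀ u v, G.Adj u v → ∀ w, G.dist w u ≠ G.dist w v) :
    PIv G = Fintype.card V * G.edgeFinset.card := by
  rw [PIv, sum_const_nat, mul_comm]
  intro e he
  induction e with
  | h u v => exact nCloser_add_nCloser_of_forall_dist_ne (h u v (G.mem_edgeFinset.mp he))

end PaperDefs

/-- For a connected bipartite graph `G` with `n` vertices and `m` edges,
`PI_v(G) = n m`. -/
theorem stmt_19 {V : Type*} [Fintype V] (G : SimpleGraph V) (hG : G.Connected)
    (hbip : G.Colorable 2) :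
    PIv G = Fintype.card V * G.edgeFinset.card :=
  PIv_eq_card_mul_of_forall_adj_dist_ne fun _ _ huv w => hbip.dist_ne_of_adj (hG w _) huv
end
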